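/- arXiv:1109.3753 — 2 statements merged into one kernel-verified Lean document; each statement's English description precedes it below -/
import Mathlib

section
/- Let σ₀ be the 2×2 identity matrix and σ₁ the bit-flip (Pauli-X) matrix over ℂ. Let |ψ_in⟩ be a unit vector of (ℂ²)^{⊗10}, ρ_in = |ψ_in⟩⟨ψ_in|, and fix κ₁,…,κ₁₀ ∈ {0,1}. For ι₁,ι₂ ∈ {0,1} write ι = 2ι₁+ι₂ ∈ {0,1,2,3}, let M_ι = |ι₁ι₂⟩⟨ι₁ι₂| ⊗ 1^{⊗8}, and let A_ι be the operator on (ℂ²)^{⊗10} that applies σ_{κ_{2ι+3}} to qubit 2ι+3 and σ_{κ_{2ι+4}} to qubit 2ι+4 and the identity to all other qubits. Let real numbers O_{x₁,x₂} (x₁,x₂ ∈ {0,1}) be given, and define X₁ = Σ_{x₁,x₂} O_{x₁,x₂} |x₁x₂⟩⟨x₁x₂| ⊗ 1^{⊗8} and, for each ι, X_{2.ι} = the operator that projects qubits 1,2 onto |ι₁ι₂⟩, projects qubits 2ι+3, 2ι+4 onto |x,y⟩ with weight O_{x,y} summed over x,y ∈ {0,1}, and acts as the identity on the remaining six qubits.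 Set ρ = (σ_{κ₁}⊗σ_{κ₂}⊗1^{⊗8}) ρ_in (σ_{κ₁}⊗σ_{κ₂}⊗1^{⊗8}), ρ′_fin = Σ_{ι=0}^{3} A_ι M_ι ρ M_ι A_ι, and ρ_fin = (⊗_{j=1}^{10} σ_{κ_j}) ρ_in (⊗_{j=1}^{10} σ_{κ_j}). Then tr(X₁ ρ′_fin) = tr(X₁ ρ_fin) and tr((Σ_{ι=0}^{3} X_{2.ι}) ρ′_fin) = tr((Σ_{ι=0}^{3} X_{2.ι}) ρ_fin); that is, the sequential measure-then-act procedure and the single final state determine the same first-stage and second-stage expected outcomes. -/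
open Matrix

/-- The single-qubit operators: `sig 0` is the identity, `sig 1` the bit-flip. -/
noncomputable def sig : Fin 2 → Matrix (Fin 2) (Fin 2) ℂ
  | 0 => 1
  | 1 => !![0, 1; 1, 0]

/-- Tensor (Kronecker) product of `n` one-qubit operators, realized as a matrix
indexed by `Fin n → Fin 2`. -/
noncomputable def tensorOp {n : ℕ} (A : Fin n → Matrix (Fin 2) (Fin 2) ℂ) :
    Matrix (Fin n → Fin 2) (Fin n → Fin 2) ℂ :=
  Matrix.of fun v w => ∏ j, A j (v j) (w j)

/-- The computational basis vector `|x⟩` of `(ℂ²)^⊗n`. -/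
def basisKet {n : ℕ} (x : Fin n → Fin 2) : (Fin n → Fin 2) → ℂ :=
  fun v => if v = x then 1 else 0

/-- The rank-one operator `|ψ⟩⟨ψ|`. -/
noncomputable def ketbra {n : ℕ} (ψ : (Fin n → Fin 2) → ℂ) :
    Matrix (Fin n → Fin 2) (Fin n → Fin 2) ℂ :=
  Matrix.vecMulVec ψ (star ψ)

/-- `Σ_{x,y} O x y |x y⟩⟨x y|` on qubits `i, j`, tensored with the identity on
all remaining qubits (a diagonal operator). -/
noncomputable def payoffOp {n : ℕ} (i j : Fin n) (O : Matrix (Fin 2) (Fin 2) ℝ) :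
    Matrix (Fin n → Fin 2) (Fin n → Fin 2) ℂ :=
  Matrix.of fun v w => if v = w then (O (v i) (v j) : ℂ) else 0

/-- First bit `ι₁` of `ι = 2ι₁ + ι₂ ∈ {0,1,2,3}`. -/
def bit1 : Fin 4 → Fin 2 := ![0, 0, 1, 1]

/-- Second bit `ι₂` of `ι = 2ι₁ + ι₂ ∈ {0,1,2,3}`. -/
def bit2 : Fin 4 → Fin 2 := ![0, 1, 0, 1]

/-- The index `ι = 2ι₁ + ι₂ ∈ {0,1,2,3}` built from its two bits. -/
def idx (a b : Fin 2) : Fin 4 := ⟨2 * a.val + b.val, by omega⟩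

/-- Zero-based index of qubit `2ι + 3`. -/
def qa : Fin 4 → Fin 10 := ![2, 4, 6, 8]

/-- Zero-based index of qubit `2ι + 4`. -/
def qb : Fin 4 → Fin 10 := ![3, 5, 7, 9]

/-- The measurement operator `M_ι = |ι₁ι₂⟩⟨ι₁ι₂| ⊗ 1^{⊗8}` on `(ℂ²)^⊗10`. -/
noncomputable def Mop (ι : Fin 4) : Matrix (Fin 10 → Fin 2) (Fin 10 → Fin 2) ℂ :=
  Matrix.of fun v w => if v = w ∧ v 0 = bit1 ι ∧ v 1 = bit2 ι then 1 else 0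

/-- The operator `X_{2.ι}` on `(ℂ²)^⊗10`: projects qubits 1,2 onto `|ι₁ι₂⟩`,
projects qubits `2ι+3, 2ι+4` onto `|x,y⟩` with weight `O x y` summed over
`x, y ∈ {0,1}`, and acts as the identity on the remaining six qubits. -/
noncomputable def X2op (O : Matrix (Fin 2) (Fin 2) ℝ) (ι : Fin 4) :
    Matrix (Fin 10 → Fin 2) (Fin 10 → Fin 2) ℂ :=
  Matrix.of fun v w =>
    if v = w ∧ v 0 = bit1 ι ∧ v 1 = bit2 ι then (O (v (qa ι)) (v (qb ι)) : ℂ) else 0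

/-! Every operator involved is either diagonal in the computational basis (the projectors `M_ι`
and both observables) or a tensor product of bit flips, i.e. the permutation matrix of a
translation `v ↦ v + c` of `(Fin 2)^10`. Hence each expectation is `∑ v, x v * ρ v v` for the
diagonal weight `x` of the observable, and the diagonal entries of both states are values of
`|ψ|²` at translates of `v`. On the branch `ι` read off qubits 1, 2 of `v`, the sequential state
has applied the flips of `κ` on qubits 1, 2, 2ι+3, 2ι+4 only, while the final state also flips
the other six qubits. Performing those remaining flips, `flipUnobserved κ`, is an involution that
preserves the branch and the four qubits the observables read, so reindexing the sum by it
identifies the two expectations. -/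

theorem Matrix.trace_diagonal_mul {ι R : Type*} [Fintype ι] [DecidableEq ι] [CommSemiring R]
    (d : ι → R) (M : Matrix ι ι R) : (diagonal d * M).trace = ∑ v, d v * M v v := by
  simp [Matrix.trace, diagonal_mul]

theorem Matrix.trace_diagonal_mul_eq_of_involutive {ι R : Type*} [Fintype ι] [DecidableEq ι]
    [CommSemiring R] {d : ι → R} {φ : ι → ι} (hφ : Function.Involutive φ)
    (hd : ∀ v, d (φ v) = d v) {M N : Matrix ι ι R} (hMN : ∀ v, M v v = N (φ v) (φ v)) :
    (diagonal d * M).trace = (diagonal d * N).trace := by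
  rw [trace_diagonal_mul, trace_diagonal_mul, ← Equiv.sum_comp (hφ.toPerm φ)]
  simp only [Function.Involutive.coe_toPerm, hMN, hd, hφ _]

section Flip

variable {n : ℕ}

theorem fin_two_add_self (a : Fin 2) : a + a = 0 := by
  fin_cases a <;> rfl

theorem fin_two_pi_add_self {α : Type*} (c : α → Fin 2) : c + c = 0 :=
  funext fun j => fin_two_add_self (c j)

theorem sig_apply (k a b : Fin 2) : sig k a b = if a + k = b then 1 else 0 := by
  fin_cases k <;> fin_cases a <;> fin_cases b <;> simp [sig]

theorem tensorOp_sig_apply (c v w : Fin n → Fin 2) :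
    tensorOp (fun j => sig (c j)) v w = if v + c = w then 1 else 0 := by
  simp only [tensorOp, Matrix.of_apply, sig_apply, Finset.prod_boole, funext_iff,
    Pi.add_apply, Finset.mem_univ, true_implies]

theorem tensorOp_ite_sig (p : Fin n → Prop) [DecidablePred p] (κ : Fin n → Fin 2) :
    tensorOp (fun j => if p j then sig (κ j) else 1)
      = tensorOp (fun j => sig (if p j then κ j else 0)) := by
  congr 1
  funext j
  split_ifs <;> rfl

theorem tensorOp_sig_conj_apply (c : Fin n → Fin 2)
    (M : Matrix (Fin n → Fin 2) (Fin n → Fin 2) ℂ) (v w : Fin n → Fin 2) :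
    (tensorOp (fun j => sig (c j)) * M * tensorOp (fun j => sig (c j))) v w
      = M (v + c) (w + c) := by
  have hflip : ∀ u : Fin n → Fin 2, u + c = w ↔ u = w + c := fun u => by
    constructor <;> rintro rfl <;> simp [add_assoc, fin_two_pi_add_self]
  simp [Matrix.mul_apply, tensorOp_sig_apply, hflip]

end Flip

def branch (v : Fin 10 → Fin 2) : Fin 4 := idx (v 0) (v 1)

theorem bits_eq_iff_idx_eq :
    ∀ (a b : Fin 2) (ι : Fin 4), (a = bit1 ι ∧ b = bit2 ι) ↔ idx a b = ι := by
  decide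

theorem Mop_eq_diagonal (ι : Fin 4) :
    Mop ι = diagonal fun v => if branch v = ι then 1 else 0 := by
  ext v w
  by_cases hvw : v = w
  · subst hvw; simp only [Mop, branch, ← bits_eq_iff_idx_eq]; simp
  · simp [Mop, hvw]

theorem sum_X2op_eq_diagonal (O : Matrix (Fin 2) (Fin 2) ℝ) :
    ∑ ι, X2op O ι = diagonal fun v => (O (v (qa (branch v))) (v (qb (branch v))) : ℂ) := by
  ext v w
  by_cases hvw : v = w
  · subst hvw; simp [X2op, Matrix.sum_apply, branch, bits_eq_iff_idx_eq]
  · simp [X2op, Matrix.sum_apply, hvw]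

theorem payoffOp_eq_diagonal {n : ℕ} (i j : Fin n) (O : Matrix (Fin 2) (Fin 2) ℝ) :
    payoffOp i j O = diagonal fun v => (O (v i) (v j) : ℂ) := rfl

theorem not_qa_or_qb_of_zero_or_one :
    ∀ (ι : Fin 4) (j : Fin 10), j = 0 ∨ j = 1 → ¬(j = qa ι ∨ j = qb ι) := by
  decide

theorem branch_add_of_apply_zero_one {v c : Fin 10 → Fin 2} (h0 : c 0 = 0) (h1 : c 1 = 0) :
    branch (v + c) = branch v := by
  simp [branch, h0, h1]

theorem Mop_conj_apply_self (ι : Fin 4) (M : Matrix (Fin 10 → Fin 2) (Fin 10 → Fin 2) ℂ)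
    (v : Fin 10 → Fin 2) :
    (Mop ι * M * Mop ι) v v = if branch v = ι then M v v else 0 := by
  rw [Mop_eq_diagonal, mul_diagonal, diagonal_mul]
  split_ifs <;> simp

theorem sum_measure_then_flip_apply_self (κ : Fin 10 → Fin 2)
    (M : Matrix (Fin 10 → Fin 2) (Fin 10 → Fin 2) ℂ) (v : Fin 10 → Fin 2) :
    (∑ ι : Fin 4, tensorOp (fun j => if j = qa ι ∨ j = qb ι then sig (κ j) else 1) * Mop ι * M
        * Mop ι * tensorOp (fun j => if j = qa ι ∨ j = qb ι then sig (κ j) else 1)) v v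
      = M (v + fun j => if j = qa (branch v) ∨ j = qb (branch v) then κ j else 0)
          (v + fun j => if j = qa (branch v) ∨ j = qb (branch v) then κ j else 0) := by
  rw [Matrix.sum_apply]
  refine (Finset.sum_congr rfl fun ι _ => ?_).trans (Fintype.sum_ite_eq (branch v) fun ι =>
    M (v + fun j => if j = qa ι ∨ j = qb ι then κ j else 0)
      (v + fun j => if j = qa ι ∨ j = qb ι then κ j else 0))
  rw [tensorOp_ite_sig, Matrix.mul_assoc _ (Mop ι) M, Matrix.mul_assoc _ (Mop ι * M) (Mop ι),
    tensorOp_sig_conj_apply, Mop_conj_apply_self, branch_add_of_apply_zero_one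
      (if_neg (not_qa_or_qb_of_zero_or_one ι 0 (by simp)))
      (if_neg (not_qa_or_qb_of_zero_or_one ι 1 (by simp)))]

def flipUnobserved (κ v : Fin 10 → Fin 2) : Fin 10 → Fin 2 :=
  v + fun j => if j = 0 ∨ j = 1 ∨ j = qa (branch v) ∨ j = qb (branch v) then 0 else κ j

theorem flipUnobserved_apply_of_observed {κ v : Fin 10 → Fin 2} {j : Fin 10}
    (hj : j = 0 ∨ j = 1 ∨ j = qa (branch v) ∨ j = qb (branch v)) :
    flipUnobserved κ v j = v j := by
  simp [flipUnobserved, hj]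

theorem branch_flipUnobserved (κ v : Fin 10 → Fin 2) : branch (flipUnobserved κ v) = branch v :=
  branch_add_of_apply_zero_one (by simp) (by simp)

theorem flipUnobserved_involutive (κ : Fin 10 → Fin 2) :
    Function.Involutive (flipUnobserved κ) := by
  intro v
  rw [flipUnobserved, branch_flipUnobserved, flipUnobserved, add_assoc, fin_two_pi_add_self,
    add_zero]

theorem flipUnobserved_add (κ v : Fin 10 → Fin 2) :
    flipUnobserved κ v + κ
      = (v + fun j => if j = qa (branch v) ∨ j = qb (branch v) then κ j else 0)
          + fun j => if j = 0 ∨ j = 1 then κ j else 0 := by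
  funext j
  simp only [flipUnobserved, Pi.add_apply]
  have hdisjoint := not_qa_or_qb_of_zero_or_one (branch v) j
  split_ifs <;> simp_all [add_assoc, fin_two_add_self]

theorem stmt_6_general (O : Matrix (Fin 2) (Fin 2) ℝ) (ψ : (Fin 10 → Fin 2) → ℂ)
    (κ : Fin 10 → Fin 2) :
    let ρin := ketbra ψ
    let Aop : Fin 4 → Matrix (Fin 10 → Fin 2) (Fin 10 → Fin 2) ℂ := fun ι =>
      tensorOp fun j => if j = qa ι ∨ j = qb ι then sig (κ j) else 1
    let U12 := tensorOp fun j : Fin 10 => if j = 0 ∨ j = 1 then sig (κ j) else 1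
    let ρ := U12 * ρin * U12
    let ρ'fin := ∑ ι : Fin 4, Aop ι * Mop ι * ρ * Mop ι * Aop ι
    let Ufull := tensorOp fun j => sig (κ j)
    let ρfin := Ufull * ρin * Ufull
    (payoffOp 0 1 O * ρ'fin).trace = (payoffOp 0 1 O * ρfin).trace
      ∧ ((∑ ι : Fin 4, X2op O ι) * ρ'fin).trace
        = ((∑ ι : Fin 4, X2op O ι) * ρfin).trace := by
  intro ρin Aop U12 ρ ρ'fin Ufull ρfin
  have hdiag : ∀ v, ρ'fin v v = ρfin (flipUnobserved κ v) (flipUnobserved κ v) := fun v => by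
    refine (sum_measure_then_flip_apply_self κ ρ v).trans ?_
    simp only [ρ, U12, ρfin, Ufull, tensorOp_ite_sig, tensorOp_sig_conj_apply,
      flipUnobserved_add]
  have hφ := flipUnobserved_involutive κ
  rw [payoffOp_eq_diagonal, sum_X2op_eq_diagonal]
  constructor
  · refine trace_diagonal_mul_eq_of_involutive hφ (fun v => ?_) hdiag
    rw [flipUnobserved_apply_of_observed (j := 0) (by simp),
      flipUnobserved_apply_of_observed (j := 1) (by simp)]
  · refine trace_diagonal_mul_eq_of_involutive hφ (fun v => ?_) hdiag
    rw [branch_flipUnobserved, flipUnobserved_apply_of_observed (j := qa (branch v)) (by simp),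
      flipUnobserved_apply_of_observed (j := qb (branch v)) (by simp)]

/-- the sequential measure-then-act procedure and the single final
state `ρ_fin = (⊗ⱼ σ_{κⱼ}) ρ_in (⊗ⱼ σ_{κⱼ})` determine the same first-stage and
second-stage expected outcomes. -/
theorem stmt_6 (O : Matrix (Fin 2) (Fin 2) ℝ) (ψ : (Fin 10 → Fin 2) → ℂ)
    (hunit : ∑ v, Complex.normSq (ψ v) = 1) (κ : Fin 10 → Fin 2) :
    let ρin := ketbra ψ
    let Aop : Fin 4 → Matrix (Fin 10 → Fin 2) (Fin 10 → Fin 2) ℂ := fun ι =>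
      tensorOp fun j => if j = qa ι ∨ j = qb ι then sig (κ j) else 1
    let U12 := tensorOp fun j : Fin 10 => if j = 0 ∨ j = 1 then sig (κ j) else 1
    let ρ := U12 * ρin * U12
    let ρ'fin := ∑ ι : Fin 4, Aop ι * Mop ι * ρ * Mop ι * Aop ι
    let Ufull := tensorOp fun j => sig (κ j)
    let ρfin := Ufull * ρin * Ufull
    (payoffOp 0 1 O * ρ'fin).trace = (payoffOp 0 1 O * ρfin).trace
      ∧ ((∑ ι : Fin 4, X2op O ι) * ρ'fin).trace
        = ((∑ ι : Fin 4, X2op O ι) * ρfin).trace :=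
  stmt_6_general O ψ κ
end

section
/- Let σ₀ be the 2×2 identity matrix and σ₁ the bit-flip (Pauli-X) matrix over ℂ. Let λ₀, λ₁ ∈ ℂ with |λ₀|² + |λ₁|² = 1 and set |φ⟩ = λ₀|00⟩ + λ₁|11⟩ in ℂ²⊗ℂ². Let O_{y₁,y₂} (y₁,y₂ ∈ {0,1}) be real numbers and X′ = Σ_{y₁,y₂} O_{y₁,y₂} |y₁y₂⟩⟨y₁y₂|. Then for all κ₁, κ₂ ∈ {0,1}: tr((σ_{κ₁}⊗σ_{κ₂}) |φ⟩⟨φ| (σ_{κ₁}⊗σ_{κ₂}) X′) = |λ₀|² O_{κ₁,κ₂} + |λ₁|² O_{κ̄₁,κ̄₂}, where κ̄ = 1 − κ denotes bit negation. -/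
/-!
`σ_κ` is the permutation matrix of the translation `x ↦ x + κ` of `Fin 2`, so
`U = σ_{κ₁} ⊗ σ_{κ₂}` is the permutation matrix of the involution `v ↦ v + κ` of
bit strings. Conjugation by `U` therefore permutes the diagonal of `|φ⟩⟨φ|`, and
against the diagonal observable `X'` the trace becomes `∑ v, |φ v|² O (v + κ)`.
Only `v = 00` and `v = 11` contribute, and `1 + κ = 1 - κ` in `Fin 2`.
-/

open Matrix

theorem Matrix.trace_conj_involution_mul_diagonal {ι R : Type*} [Fintype ι] [DecidableEq ι]
    [Semiring R] (σ : Equiv.Perm ι) (hσ : Function.Involutive σ)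
    (M : Matrix ι ι R) (d : ι → R) :
    (σ.toPEquiv.toMatrix * M * σ.toPEquiv.toMatrix * diagonal d).trace
      = ∑ i, M i i * d (σ i) := by
  have hsymm : ∀ i, σ.symm i = σ i := fun i => σ.symm_apply_eq.mpr (hσ i).symm
  rw [PEquiv.toMatrix_toPEquiv_mul, PEquiv.mul_toMatrix_toPEquiv, ← Equiv.sum_comp σ]
  simp [trace, mul_diagonal, hsymm, hσ _]

theorem tensorOp_toMatrix_toPEquiv {n : ℕ} (σ : Fin n → Equiv.Perm (Fin 2)) :
    tensorOp (fun j => (σ j).toPEquiv.toMatrix) = (Equiv.piCongrRight σ).toPEquiv.toMatrix := by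
  ext v w
  simp [tensorOp, Fintype.prod_boole, funext_iff, eq_comm]

theorem sig_eq_toMatrix_addRight (κ : Fin 2) : sig κ = (Equiv.addRight κ).toPEquiv.toMatrix := by
  ext i j
  fin_cases κ <;> fin_cases i <;> fin_cases j <;> simp [sig]

theorem tensorOp_sig {n : ℕ} (κ : Fin n → Fin 2) :
    tensorOp (fun j => sig (κ j)) = (Equiv.addRight κ).toPEquiv.toMatrix := by
  simp_rw [sig_eq_toMatrix_addRight, tensorOp_toMatrix_toPEquiv]
  rfl

theorem addRight_involutive_bits {n : ℕ} (κ : Fin n → Fin 2) :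
    Function.Involutive (Equiv.addRight κ) := by
  intro v
  ext j
  simp only [Equiv.coe_addRight, Pi.add_apply, add_assoc]
  generalize v j = a, κ j = b
  revert a b
  decide

theorem ketbra_apply_self {n : ℕ} (ψ : (Fin n → Fin 2) → ℂ) (v : Fin n → Fin 2) :
    ketbra ψ v v = Complex.normSq (ψ v) := by
  simp [ketbra, vecMulVec_apply, Complex.mul_conj]

theorem stmt_8_general (l₀ l₁ : ℂ)
    (O : Matrix (Fin 2) (Fin 2) ℝ) (κ₁ κ₂ : Fin 2) :
    let φ : (Fin 2 → Fin 2) → ℂ := fun v =>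
      l₀ * basisKet ![0, 0] v + l₁ * basisKet ![1, 1] v
    let X' : Matrix (Fin 2 → Fin 2) (Fin 2 → Fin 2) ℂ :=
      Matrix.of fun v w => if v = w then (O (v 0) (v 1) : ℂ) else 0
    let U := tensorOp ![sig κ₁, sig κ₂]
    (U * ketbra φ * U * X').trace
      = ((Complex.normSq l₀ * O κ₁ κ₂
          + Complex.normSq l₁ * O (1 - κ₁) (1 - κ₂) : ℝ) : ℂ) := by
  intro φ X' U
  have hU : U = (Equiv.addRight ![κ₁, κ₂]).toPEquiv.toMatrix := by
    rw [← tensorOp_sig]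
    congr
  have hX : X' = diagonal fun v => (O (v 0) (v 1) : ℂ) := by
    ext v w
    simp [X', diagonal_apply]
  rw [hU, hX, trace_conj_involution_mul_diagonal _ (addRight_involutive_bits _)]
  simp only [ketbra_apply_self]
  rw [Fintype.sum_eq_add ![0, 0] ![1, 1] (by decide)]
  · have hflip : ∀ κ : Fin 2, 1 + κ = 1 - κ := by decide
    simp [φ, basisKet, hflip]
  · rintro v ⟨h₀, h₁⟩
    simp [φ, basisKet, h₀, h₁]

/-- the expected-outcome formula of the Marinatto–Weber `2×2`
quantum game with initial state `|φ⟩ = λ₀|00⟩ + λ₁|11⟩`: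
`tr((σ_{κ₁}⊗σ_{κ₂})|φ⟩⟨φ|(σ_{κ₁}⊗σ_{κ₂}) X') = |λ₀|² O(κ₁,κ₂) + |λ₁|² O(κ̄₁,κ̄₂)`. -/
theorem stmt_8 (l₀ l₁ : ℂ) (hunit : Complex.normSq l₀ + Complex.normSq l₁ = 1)
    (O : Matrix (Fin 2) (Fin 2) ℝ) (κ₁ κ₂ : Fin 2) :
    let φ : (Fin 2 → Fin 2) → ℂ := fun v =>
      l₀ * basisKet ![0, 0] v + l₁ * basisKet ![1, 1] v
    let X' : Matrix (Fin 2 → Fin 2) (Fin 2 → Fin 2) ℂ :=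
      Matrix.of fun v w => if v = w then (O (v 0) (v 1) : ℂ) else 0
    let U := tensorOp ![sig κ₁, sig κ₂]
    (U * ketbra φ * U * X').trace
      = ((Complex.normSq l₀ * O κ₁ κ₂
          + Complex.normSq l₁ * O (1 - κ₁) (1 - κ₂) : ℝ) : ℂ) :=
  stmt_8_general l₀ l₁ O κ₁ κ₂
end
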